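/- arXiv:1709.00427 — 2 statements merged into one kernel-verified Lean document; each statement's English description precedes it below -/
import Mathlib

section
/- Define S(ν) = ((ν+1)/2)·log((ν+1)/2) − ((ν−1)/2)·log((ν−1)/2) for ν ≥ 1 (with S(1) = 0 by continuity). Then for all ν ≥ 1, one has 0 ≤ S(ν) − log ν < 1 − log 2. -/
open Real Filter Set Topology

/-!
With `f ν = entS ν - log ν`, one computes `f' ν = ½ log ((ν + 1) / (ν - 1)) - 1 / ν`. Writing
`(ν + 1) / (ν - 1) = 1 + a⁻¹` with `2a + 1 = ν`, the series
`log (1 + a⁻¹) = ∑ 2 / (2k + 1) · (2a + 1)^{-(2k+1)}` has positive terms and first term `2 / ν`,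
so `f' > 0`. Hence `f` increases strictly from `f 1 = 0` towards its limit `1 - log 2` at
infinity, a value it therefore never attains.
-/

/-- Single-mode entanglement entropy of a Gaussian state with symplectic
eigenvalue `ν`. At `ν = 1` the second term is `0` since `Real.log 0 = 0`. -/
noncomputable def entS (ν : ℝ) : ℝ :=
  ((ν + 1) / 2) * Real.log ((ν + 1) / 2) - ((ν - 1) / 2) * Real.log ((ν - 1) / 2)

lemma two_div_lt_log_one_add_inv {a : ℝ} (ha : 0 < a) : 2 / (2 * a + 1) < log (1 + a⁻¹) := by
  have hterm_pos (k : ℕ) : 0 < 2 * (1 / (2 * k + 1 : ℝ)) * (1 / (2 * a + 1)) ^ (2 * k + 1) := by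
    positivity
  have hpartial := sum_le_hasSum (Finset.range 2) (fun k _ => (hterm_pos k).le)
    (hasSum_log_one_add_inv ha)
  have hfirst : 2 * (1 / (2 * (0 : ℕ) + 1 : ℝ)) * (1 / (2 * a + 1)) ^ (2 * 0 + 1)
      = 2 / (2 * a + 1) := by
    norm_num [div_eq_mul_inv]
  rw [Finset.sum_range_succ, Finset.sum_range_one, hfirst] at hpartial
  linarith [hterm_pos 1]

lemma StrictMonoOn.lt_of_tendsto_atTop {α β : Type*} [LinearOrder α] [NoMaxOrder α]
    [TopologicalSpace β] [Preorder β] [OrderClosedTopology β] {f : α → β} {a x : α} {L : β}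
    (hf : StrictMonoOn f (Ici a)) (hL : Tendsto f atTop (𝓝 L)) (hx : a ≤ x) : f x < L := by
  have : Nonempty α := ⟨a⟩
  obtain ⟨y, hxy⟩ := exists_gt x
  have hy : a ≤ y := hx.trans hxy.le
  refine (hf hx hy hxy).trans_le (ge_of_tendsto hL ?_)
  filter_upwards [eventually_ge_atTop y] with z hz
  exact hf.monotoneOn hy (hy.trans hz) hz

lemma entS_one : entS 1 = 0 := by simp [entS]

lemma continuous_entS : Continuous entS :=
  (continuous_mul_log.comp (by fun_prop)).sub (continuous_mul_log.comp (by fun_prop))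

lemma hasDerivAt_entS_sub_log {ν : ℝ} (hν : 1 < ν) :
    HasDerivAt (fun ν => entS ν - log ν) (log (1 + ((ν - 1) / 2)⁻¹) / 2 - ν⁻¹) ν := by
  have hplus : HasDerivAt (fun x : ℝ => (x + 1) / 2) (1 / 2) ν :=
    ((hasDerivAt_id ν).add_const 1).div_const 2
  have hminus : HasDerivAt (fun x : ℝ => (x - 1) / 2) (1 / 2) ν :=
    ((hasDerivAt_id ν).sub_const 1).div_const 2
  have hentS : HasDerivAt entS
      ((log ((ν + 1) / 2) + 1) * (1 / 2) - (log ((ν - 1) / 2) + 1) * (1 / 2)) ν :=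
    ((hasDerivAt_mul_log (by positivity)).comp ν hplus).sub
      ((hasDerivAt_mul_log (by linarith)).comp ν hminus)
  have hlog : log (1 + ((ν - 1) / 2)⁻¹) = log ((ν + 1) / 2) - log ((ν - 1) / 2) := by
    have : ν - 1 ≠ 0 := by linarith
    rw [← log_div (by positivity) (by positivity)]
    congr 1
    field_simp
    ring
  refine (hentS.sub (hasDerivAt_log (by positivity))).congr_deriv ?_
  rw [hlog]
  ring

lemma strictMonoOn_entS_sub_log : StrictMonoOn (fun ν => entS ν - log ν) (Ici 1) := by
  refine strictMonoOn_of_deriv_pos (convex_Ici 1) ?_ fun ν hν => ?_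
  · exact continuous_entS.continuousOn.sub <| continuousOn_log.mono fun ν (hν : 1 ≤ ν) => by
      simp only [mem_compl_iff, mem_singleton_iff]; linarith
  rw [interior_Ici, mem_Ioi] at hν
  rw [(hasDerivAt_entS_sub_log hν).deriv, sub_pos]
  have key := two_div_lt_log_one_add_inv (a := (ν - 1) / 2) (by linarith)
  rw [show 2 * ((ν - 1) / 2) + 1 = ν by ring] at key
  linarith [show 2 / ν = 2 * ν⁻¹ by ring]

lemma tendsto_entS_sub_log_atTop :
    Tendsto (fun ν => entS ν - log ν) atTop (𝓝 (1 - log 2)) := by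
  have hdecomp : ∀ᶠ ν in atTop, log (1 + ν⁻¹) - log 2 + (ν - 1) * log (1 + 2 / (ν - 1)) / 2
      = entS ν - log ν := by
    filter_upwards [eventually_gt_atTop 1] with ν hν
    have hν0 : ν ≠ 0 := by linarith
    have hν1 : ν - 1 ≠ 0 := by linarith
    have hν2 : ν + 1 ≠ 0 := by linarith
    rw [show 1 + ν⁻¹ = (ν + 1) / ν by field_simp, show 1 + 2 / (ν - 1) = (ν + 1) / (ν - 1) by
      field_simp; ring]
    rw [entS, log_div hν2 hν0, log_div hν2 hν1, log_div hν2 two_ne_zero, log_div hν1 two_ne_zero]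
    ring
  have hfirst : Tendsto (fun ν : ℝ => log (1 + ν⁻¹)) atTop (𝓝 0) := by
    have hinv : Tendsto (fun ν : ℝ => 1 + ν⁻¹) atTop (𝓝 1) := by
      simpa using tendsto_inv_atTop_zero.const_add (1 : ℝ)
    rw [← log_one]
    exact (continuousAt_log one_ne_zero).tendsto.comp hinv
  have hsecond : Tendsto (fun ν : ℝ => (ν - 1) * log (1 + 2 / (ν - 1))) atTop (𝓝 2) :=
    (tendsto_mul_log_one_add_div_atTop 2).comp (tendsto_atTop_add_const_right atTop (-1) tendsto_id)
  have hlim := (hfirst.sub_const (log 2)).add (hsecond.div_const 2)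
  rw [show 0 - log 2 + 2 / 2 = 1 - log 2 by ring] at hlim
  exact hlim.congr' hdecomp

theorem entS_sub_log_bounds (ν : ℝ) (hν : 1 ≤ ν) :
    0 ≤ entS ν - Real.log ν ∧ entS ν - Real.log ν < 1 - Real.log 2 := by
  refine ⟨?_, strictMonoOn_entS_sub_log.lt_of_tendsto_atTop tendsto_entS_sub_log_atTop hν⟩
  simpa [entS_one] using strictMonoOn_entS_sub_log.monotoneOn self_mem_Ici hν hν
end

section
/- Let Ω be the standard symplectic form on ℝ^{2N}, ω = Ω^{−1}, and let G be a symmetric positive definite 2N×2N matrix. Define J = −Gω. Suppose a subsystem A is given by a symplectic subspace with symplectic Darboux basis, so that the restricted symplectic form ω_A has determinant 1 and the restricted complex structure satisfies [J]_A = −[G]_A ω_A. Then |det([iJ]_A)| = det([G]_A); equivalently, |det([J]_A)| equals the square of the volume Vol_G(𝒱_A) of the unit symplectic cube of A measured in the metric G. Hence the Rényi-2 entropy R_A = ½ log|det([iJ]_A)| equals log Vol_G(𝒱_A). -/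
/-! The Rényi-2 entropy only sees `|det [iJ]_A| = |det [G]_A| · |det ω_A|`: the factor
`i^{2N_A}` and the sign of `-[G]_A` have modulus one, and so does `det ω_A` because `Ω² = -1` in
even dimension. Positivity of `G` makes `[G]_A = T G Tᵀ` positive semidefinite, hence
`det [G]_A ≥ 0`, so the modulus can be dropped and `½ log det [G]_A = log √(det [G]_A)`. -/

open Matrix

/-- The standard symplectic form `Ω = [[0, I], [-I, 0]]`. -/
def stdSymp (N : ℕ) : Matrix (Fin N ⊕ Fin N) (Fin N ⊕ Fin N) ℝ :=
  Matrix.fromBlocks 0 1 (-1) 0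

theorem stdSymp_mul_self (N : ℕ) : stdSymp N * stdSymp N = -1 := by
  rw [stdSymp, fromBlocks_multiply, ← fromBlocks_one, fromBlocks_neg]
  simp

theorem inv_stdSymp (N : ℕ) : (stdSymp N)⁻¹ = -stdSymp N :=
  inv_eq_left_inv (by rw [neg_mul, stdSymp_mul_self, neg_neg])

theorem abs_det_stdSymp (N : ℕ) : |(stdSymp N).det| = 1 := by
  have hsq : (stdSymp N).det ^ 2 = 1 := by
    rw [sq, ← det_mul, stdSymp_mul_self, det_neg, det_one, Fintype.card_sum, Fintype.card_fin,
      ← two_mul, pow_mul]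
    norm_num
  rwa [← abs_one, ← sq_eq_sq_iff_abs_eq_abs, one_pow]

theorem norm_det_I_smul_map_ofReal {ι : Type*} [Fintype ι] [DecidableEq ι] (A : Matrix ι ι ℝ) :
    ‖(Complex.I • A.map Complex.ofReal).det‖ = |A.det| := by
  rw [det_smul, norm_mul, norm_pow, Complex.norm_I, one_pow, one_mul,
    show (A.map Complex.ofReal).det = A.det from (Complex.ofRealHom.map_det A).symm,
    Complex.norm_real, Real.norm_eq_abs]

theorem abs_det_neg_mul_inv_stdSymp {N : ℕ} (M : Matrix (Fin N ⊕ Fin N) (Fin N ⊕ Fin N) ℝ) :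
    |(-M * (stdSymp N)⁻¹).det| = |M.det| := by
  rw [inv_stdSymp, neg_mul_neg, det_mul, abs_mul, abs_det_stdSymp, mul_one]

theorem renyi_as_phase_space_volume_general (N m : ℕ)
    (G : Matrix (Fin N ⊕ Fin N) (Fin N ⊕ Fin N) ℝ)
    (hG : G.PosDef)
    (T : Matrix (Fin m ⊕ Fin m) (Fin N ⊕ Fin N) ℝ) :
    ‖(Complex.I • ((-(T * G * Tᵀ) * (stdSymp m)⁻¹).map
        (Complex.ofReal))).det‖ = (T * G * Tᵀ).det ∧
    (1 / 2) * Real.log ‖(Complex.I • ((-(T * G * Tᵀ) * (stdSymp m)⁻¹).map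
        (Complex.ofReal))).det‖ = Real.log (Real.sqrt (T * G * Tᵀ).det) := by
  have hdet : 0 ≤ (T * G * Tᵀ).det := by
    simpa only [conjTranspose_eq_transpose_of_trivial] using
      (hG.posSemidef.mul_mul_conjTranspose_same T).det_nonneg
  have hnorm : ‖(Complex.I • ((-(T * G * Tᵀ) * (stdSymp m)⁻¹).map
      (Complex.ofReal))).det‖ = (T * G * Tᵀ).det := by
    rw [norm_det_I_smul_map_ofReal, abs_det_neg_mul_inv_stdSymp, abs_of_nonneg hdet]
  refine ⟨hnorm, ?_⟩
  rw [hnorm, Real.log_sqrt hdet]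
  ring

/-- Rényi entropy as a phase-space volume: for `J = -Gω` with `G` symmetric positive
definite, and a symplectic subsystem given by a Darboux basis (rows of `T`, so that
the restricted symplectic form `T Ω Tᵀ` is standard with `det ω_A = 1`), the
restricted complex structure `[J]_A = -[G]_A ω_A` satisfies
`|det([iJ]_A)| = det([G]_A) = Vol_G(𝒱_A)²`, hence
`R_A = ½ log|det([iJ]_A)| = log Vol_G(𝒱_A)` with `Vol_G(𝒱_A) = √(det [G]_A)`. -/
theorem renyi_as_phase_space_volume (N m : ℕ)
    (G : Matrix (Fin N ⊕ Fin N) (Fin N ⊕ Fin N) ℝ)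
    (hG : G.PosDef) (hGsymm : Gᵀ = G)
    (T : Matrix (Fin m ⊕ Fin m) (Fin N ⊕ Fin N) ℝ)
    (hDarboux : T * stdSymp N * Tᵀ = stdSymp m) :
    ‖(Complex.I • ((-(T * G * Tᵀ) * (stdSymp m)⁻¹).map
        (Complex.ofReal))).det‖ = (T * G * Tᵀ).det ∧
    (1 / 2) * Real.log ‖(Complex.I • ((-(T * G * Tᵀ) * (stdSymp m)⁻¹).map
        (Complex.ofReal))).det‖ = Real.log (Real.sqrt (T * G * Tᵀ).det) :=
  renyi_as_phase_space_volume_general N m G hG T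
end
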